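/- arXiv:1904.11040 — 4 statements merged into one kernel-verified Lean document; each statement's English description precedes it below -/
import Mathlib

section
/- Let κ > 2 and m ∈ (0, 1). Define g(ρ) := (κ − 2√(1 − m/ρ))/(κ − 2√(1 − m)) − ρ for ρ ∈ (m, ∞) (the denominator is positive). Then g(1) = 0 and g'(ρ) < 0 for all ρ ∈ (m, ∞). Consequently ρ = 1 is the unique zero of g on (m, ∞), with g(ρ) > 0 for ρ ∈ (m, 1) and g(ρ) < 0 for ρ ∈ (1, ∞). -/
open Real

/-! The numerator `κ - 2√(1 - m/ρ)` decreases in `ρ` because `m/ρ` does, so `g` is a decreasing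
function minus `ρ`: its derivative is negative, and `g` is strictly antitone on `(m, ∞)` with its
only zero at `ρ = 1`, where numerator and denominator agree. -/

lemma hasDerivAt_sqrt_one_sub_div {m ρ : ℝ} (hρ : ρ ≠ 0) (hρm : 1 - m / ρ ≠ 0) :
    HasDerivAt (fun x => √(1 - m / x)) (m / ρ ^ 2 / (2 * √(1 - m / ρ))) ρ := by
  have h : HasDerivAt (fun x : ℝ => 1 - m / x) (m / ρ ^ 2) ρ := by
    simpa [div_eq_mul_inv] using ((hasDerivAt_inv hρ).const_mul m).const_sub 1
  exact h.sqrt hρm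

lemma one_sub_div_pos {m ρ : ℝ} (hm : 0 < m) (hρ : m < ρ) : 0 < 1 - m / ρ :=
  sub_pos.2 ((div_lt_one (hm.trans hρ)).2 hρ)

lemma hasDerivAt_flow_rhs (κ D : ℝ) {m ρ : ℝ} (hm : 0 < m) (hρ : m < ρ) :
    HasDerivAt (fun x => (κ - 2 * √(1 - m / x)) / D - x)
      (-(m / ρ ^ 2 / √(1 - m / ρ)) / D - 1) ρ := by
  have h := ((hasDerivAt_sqrt_one_sub_div (hm.trans hρ).ne' (one_sub_div_pos hm hρ).ne'
    |>.const_mul 2 |>.const_sub κ).div_const D).sub (hasDerivAt_id ρ)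
  exact h.congr_deriv (by ring)

lemma flow_rhs_deriv_neg {D m : ℝ} (ρ : ℝ) (hD : 0 < D) (hm : 0 ≤ m) :
    -(m / ρ ^ 2 / √(1 - m / ρ)) / D - 1 < 0 := by
  have : 0 ≤ m / ρ ^ 2 / √(1 - m / ρ) / D := by positivity
  rw [neg_div]
  linarith

/-- For `κ > 2` and `m ∈ (0,1)`, the function
`g(ρ) := (κ − 2√(1 − m/ρ))/(κ − 2√(1 − m)) − ρ` on `(m, ∞)` (whose denominator is
positive) satisfies `g(1) = 0` and `g'(ρ) < 0` on `(m, ∞)`; consequently `ρ = 1` is the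
unique zero of `g` on `(m, ∞)`, with `g > 0` on `(m, 1)` and `g < 0` on `(1, ∞)`. -/
theorem schwarzschild_flow_rhs_monotone (κ m : ℝ) (hκ : 2 < κ) (hm : m ∈ Set.Ioo (0:ℝ) 1) :
    let g : ℝ → ℝ := fun ρ => (κ - 2 * Real.sqrt (1 - m/ρ)) / (κ - 2 * Real.sqrt (1 - m)) - ρ
    0 < κ - 2 * Real.sqrt (1 - m) ∧
    g 1 = 0 ∧
    (∀ ρ : ℝ, m < ρ → deriv g ρ < 0) ∧
    (∀ ρ : ℝ, m < ρ → g ρ = 0 → ρ = 1) ∧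
    (∀ ρ : ℝ, m < ρ → ρ < 1 → 0 < g ρ) ∧
    (∀ ρ : ℝ, 1 < ρ → g ρ < 0) := by
  obtain ⟨hm0, hm1⟩ := hm
  intro g
  have hD : 0 < κ - 2 * √(1 - m) := by
    have : √(1 - m) ≤ 1 := sqrt_le_one.2 (by linarith)
    linarith
  have hg1 : g 1 = 0 := by simp [g, hD.ne']
  have hg' (ρ : ℝ) (hρ : m < ρ) := hasDerivAt_flow_rhs κ (κ - 2 * √(1 - m)) hm0 hρ
  have hderiv (ρ : ℝ) (hρ : m < ρ) : deriv g ρ < 0 :=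
    (hg' ρ hρ).deriv ▸ flow_rhs_deriv_neg ρ hD hm0.le
  have hanti : StrictAntiOn g (Set.Ioi m) :=
    strictAntiOn_of_deriv_neg (convex_Ioi m)
      (fun x hx => (hg' x hx).continuousAt.continuousWithinAt)
      (by rw [interior_Ioi]; exact hderiv)
  refine ⟨hD, hg1, hderiv, fun ρ hρ hgρ => hanti.injOn hρ hm1 (hgρ.trans hg1.symm),
    fun ρ hρ hρ1 => hg1 ▸ hanti hρ hm1 hρ1, fun ρ hρ => hg1 ▸ hanti hm1 (hm1.trans hρ) hρ⟩
end

section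
/- Let M > 0, R̄ > 2M, and κ > 2. Define F(R) := [−(2/R)√(1 − 2M/R) + (2/R̄)√(1 − 2M/R̄) + κ(1/R − 1/R̄)]·√(1 − 2M/R) for R ∈ (2M, ∞). Then F(R̄) = 0, F(R) > 0 for all R ∈ (2M, R̄), and F(R) < 0 for all R ∈ (R̄, ∞). In particular, R̄ is the unique zero of F on (2M, ∞). -/
/-!
Substituting `x = 1/R`, `F = G(1/R) · √(1 - 2M/R)` with
`G(x) = κ (x - b) - 2 (g x - g b)`, `g x = x √(1 - 2M x)`, `b = 1/R̄`.
Since `x (1 - √(1 - 2M x)) = 2M x² / (1 + √(1 - 2M x))` is increasing, `g` grows at most as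
fast as the identity, so `G(x)` has the sign of `(κ - 2)(x - b)`.
-/

open Real

lemma mul_one_sub_sqrt_one_sub_mul_le {m u v : ℝ} (hm : 0 ≤ m) (hu : 0 ≤ u) (huv : u ≤ v)
    (hmv : m * v ≤ 1) :
    u * (1 - √(1 - m * u)) ≤ v * (1 - √(1 - m * v)) := by
  have hmu : 0 ≤ 1 - m * u := by nlinarith
  have hsu : √(1 - m * u) ^ 2 = 1 - m * u := sq_sqrt hmu
  have hsv : √(1 - m * v) ^ 2 = 1 - m * v := sq_sqrt (by linarith)
  have hu' : u * (1 - √(1 - m * u)) = m * u ^ 2 / (1 + √(1 - m * u)) := by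
    rw [eq_div_iff (by positivity)]
    linear_combination (-u) * hsu
  have hv' : v * (1 - √(1 - m * v)) = m * v ^ 2 / (1 + √(1 - m * v)) := by
    rw [eq_div_iff (by positivity)]
    linear_combination (-v) * hsv
  have hsqrt : √(1 - m * v) ≤ √(1 - m * u) := sqrt_le_sqrt (by nlinarith)
  rw [hu', hv']
  exact div_le_div₀ (by positivity) (by gcongr) (by positivity) (by linarith)

lemma sub_mul_sqrt_one_sub_mul_pos {m κ u v : ℝ} (hm : 0 ≤ m) (hκ : 2 < κ) (hu : 0 ≤ u)
    (huv : u < v) (hmv : m * v ≤ 1) :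
    0 < κ * (v - u) - 2 * (v * √(1 - m * v) - u * √(1 - m * u)) := by
  have hmono := mul_one_sub_sqrt_one_sub_mul_le hm hu huv.le hmv
  nlinarith [mul_pos (sub_pos.2 hκ) (sub_pos.2 huv)]

/-- For `M > 0`, `R̄ > 2M`, `κ > 2`, the right-hand side
`F(R) := [−(2/R)√(1 − 2M/R) + (2/R̄)√(1 − 2M/R̄) + κ(1/R − 1/R̄)]·√(1 − 2M/R)`
of the reduced Schwarzschild circle-flow ODE satisfies `F(R̄) = 0`, `F > 0` on `(2M, R̄)`
and `F < 0` on `(R̄, ∞)`; in particular `R̄` is the unique zero of `F` on `(2M, ∞)`. -/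
theorem schwarzschild_flow_rhs_sign (M Rbar κ : ℝ) (hM : 0 < M) (hRbar : 2 * M < Rbar)
    (hκ : 2 < κ) :
    let F : ℝ → ℝ := fun R =>
      (-(2/R) * Real.sqrt (1 - 2*M/R) + (2/Rbar) * Real.sqrt (1 - 2*M/Rbar)
        + κ * (1/R - 1/Rbar)) * Real.sqrt (1 - 2*M/R)
    F Rbar = 0 ∧
    (∀ R : ℝ, 2*M < R → R < Rbar → 0 < F R) ∧
    (∀ R : ℝ, Rbar < R → F R < 0) ∧
    (∀ R : ℝ, 2*M < R → F R = 0 → R = Rbar) := by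
  intro F
  have hm : 0 ≤ 2 * M := by linarith
  have hF : ∀ R, F R = (κ * (1/R - 1/Rbar)
      - 2 * (1/R * √(1 - 2*M * (1/R)) - 1/Rbar * √(1 - 2*M * (1/Rbar)))) * √(1 - 2*M/R) := by
    intro R
    simp only [F, mul_one_div]
    ring
  have hdom : ∀ R, 2*M < R → 0 < R ∧ 2*M * (1/R) ≤ 1 ∧ 0 < √(1 - 2*M/R) := fun R hR => by
    have hR0 : 0 < R := by linarith
    have hlt : 2*M/R < 1 := (div_lt_one hR0).2 hR
    exact ⟨hR0, by rw [mul_one_div]; exact hlt.le, sqrt_pos.2 (by linarith)⟩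
  obtain ⟨hRbar0, hmRbar, -⟩ := hdom Rbar hRbar
  have hpos : ∀ R : ℝ, 2*M < R → R < Rbar → 0 < F R := by
    intro R hR hRRbar
    obtain ⟨hR0, hmR, hsqrt⟩ := hdom R hR
    rw [hF]
    exact mul_pos (sub_mul_sqrt_one_sub_mul_pos hm hκ (by positivity)
      (one_div_lt_one_div_of_lt hR0 hRRbar) hmR) hsqrt
  have hneg : ∀ R : ℝ, Rbar < R → F R < 0 := by
    intro R hRbarR
    obtain ⟨hR0, -, hsqrt⟩ := hdom R (hRbar.trans hRbarR)
    have hG := sub_mul_sqrt_one_sub_mul_pos hm hκ (by positivity)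
      (one_div_lt_one_div_of_lt hRbar0 hRbarR) hmRbar
    rw [hF]
    exact mul_neg_of_neg_of_pos (by linarith) hsqrt
  refine ⟨by simp only [F]; ring, hpos, hneg, fun R hR hFR => ?_⟩
  rcases lt_trichotomy R Rbar with h | h | h
  · exact absurd hFR (hpos R hR h).ne'
  · exact h
  · exact absurd hFR (hneg R h).ne
end

section
/- Let M > 0, R̄ > 2M, κ > 2, and let F(R) := [−(2/R)√(1 − 2M/R) + (2/R̄)√(1 − 2M/R̄) + κ(1/R − 1/R̄)]·√(1 − 2M/R) on (2M, ∞). Every differentiable solution R : [0,∞) → (2M, ∞) of R'(t) = F(R(t)) is monotone: constant if R(0) = R̄, strictly decreasing with R(t) > R̄ for all t if R(0) > R̄, strictly increasing with R(t) < R̄ for all t if R(0) < R̄; and in all cases R(t) → R̄ as t → ∞. Thus the target circle R ≡ R̄ is globally asymptotically stable for the reduced flow in a fixed Schwarzschild background. -/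
open Real Filter

/-!
Put `φ(R) = (κ - 2√(1 - 2M/R)) / R`. The field factors as `F(R) = (φ(R) - φ(R̄)) √(1 - 2M/R)`,
and `φ` is strictly decreasing on `(2M, ∞)` because `√(1 - 2M/R)` increases while
`κ - 2√(1 - 2M/R) ≥ κ - 2 > 0`; so `F` is positive below `R̄`, negative above it, and vanishes at
`R̄`. Being `C¹` on `(2M, ∞)`, `F` is locally Lipschitz, so a trajectory that touches `R̄` is
constant by uniqueness of solutions, and by the intermediate value theorem any other one stays on
one side of `R̄` and is strictly monotone there. A bounded monotone trajectory converges, and the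
mean value theorem on the intervals `[n, n + 1]` shows that its limit is a zero of `F`, i.e. `R̄`.
-/

open Set Topology

section AutonomousScalarODE

variable {f x y : ℝ → ℝ} {U : Set ℝ} {a e : ℝ}

theorem eqOn_Ici_of_locallyLipschitzOn (hf : LocallyLipschitzOn U f)
    (hx : ∀ t ∈ Ici a, HasDerivWithinAt x (f (x t)) (Ici a) t) (hxU : MapsTo x (Ici a) U)
    (hy : ∀ t ∈ Ici a, HasDerivWithinAt y (f (y t)) (Ici a) t) (hyU : MapsTo y (Ici a) U)
    {t₀ : ℝ} (ht₀ : a ≤ t₀) (heq : x t₀ = y t₀) : EqOn x y (Ici a) := by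
  intro t ht
  set T := max t t₀
  have hsub : Icc a T ⊆ Ici a := Icc_subset_Ici_self
  have hxc : ContinuousOn x (Icc a T) := fun s hs => (hx s (hsub hs)).continuousWithinAt.mono hsub
  have hyc : ContinuousOn y (Icc a T) := fun s hs => (hy s (hsub hs)).continuousWithinAt.mono hsub
  set K := x '' Icc a T ∪ y '' Icc a T
  obtain ⟨L, hL⟩ := (hf.mono (union_subset (hxU.mono_left hsub).image_subset
    (hyU.mono_left hsub).image_subset)).exists_lipschitzOnWith_of_compact
    ((isCompact_Icc.image_of_continuousOn hxc).union (isCompact_Icc.image_of_continuousOn hyc))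
  have hxK : ∀ s ∈ Icc a T, x s ∈ K := fun s hs => Or.inl (mem_image_of_mem x hs)
  have hyK : ∀ s ∈ Icc a T, y s ∈ K := fun s hs => Or.inr (mem_image_of_mem y hs)
  have hderiv {z : ℝ → ℝ} (hz : ∀ t ∈ Ici a, HasDerivWithinAt z (f (z t)) (Ici a) t) {s : ℝ}
      (hs : a < s) : HasDerivAt z (f (z s)) s :=
    (hz s hs.le).hasDerivAt (Ici_mem_nhds hs)
  rcases le_total t t₀ with htt₀ | ht₀t
  · have hIcc : Icc a t₀ ⊆ Icc a T := Icc_subset_Icc_right (le_max_right _ _)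
    exact ODE_solution_unique_of_mem_Icc_left (v := fun _ => f) (s := fun _ => K)
      (fun _ _ => hL) (hxc.mono hIcc)
      (fun s hs => (hderiv hx hs.1).hasDerivWithinAt)
      (fun s hs => hxK s (hIcc (Ioc_subset_Icc_self hs)))
      (hyc.mono hIcc) (fun s hs => (hderiv hy hs.1).hasDerivWithinAt)
      (fun s hs => hyK s (hIcc (Ioc_subset_Icc_self hs))) heq ⟨ht, htt₀⟩
  · have hIcc : Icc t₀ T ⊆ Icc a T := Icc_subset_Icc_left ht₀
    exact ODE_solution_unique_of_mem_Icc_right (v := fun _ => f) (s := fun _ => K)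
      (fun _ _ => hL) (hxc.mono hIcc)
      (fun s hs => (hx s (ht₀.trans hs.1)).mono (Ici_subset_Ici.mpr (ht₀.trans hs.1)))
      (fun s hs => hxK s (hIcc (Ico_subset_Icc_self hs)))
      (hyc.mono hIcc)
      (fun s hs => (hy s (ht₀.trans hs.1)).mono (Ici_subset_Ici.mpr (ht₀.trans hs.1)))
      (fun s hs => hyK s (hIcc (Ico_subset_Icc_self hs))) heq ⟨ht₀t, le_max_left _ _⟩

theorem lt_of_continuousOn_Ici_of_ne (hx : ContinuousOn x (Ici a))
    (hne : ∀ t ∈ Ici a, x t ≠ e) (ha : x a < e) : ∀ t ∈ Ici a, x t < e := by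
  intro t ht
  by_contra! hle
  obtain ⟨s, hs, hse⟩ := intermediate_value_Icc ht (hx.mono Icc_subset_Ici_self) ⟨ha.le, hle⟩
  exact hne s hs.1 hse

theorem lt_of_continuousOn_Ici_of_ne' (hx : ContinuousOn x (Ici a))
    (hne : ∀ t ∈ Ici a, x t ≠ e) (ha : e < x a) : ∀ t ∈ Ici a, e < x t := by
  intro t ht
  by_contra! hle
  obtain ⟨s, hs, hse⟩ := intermediate_value_Icc' ht (hx.mono Icc_subset_Ici_self) ⟨hle, ha.le⟩
  exact hne s hs.1 hse

theorem eq_zero_of_tendsto_of_tendsto_deriv {x' : ℝ → ℝ} {L c : ℝ}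
    (hx : ∀ᶠ t in atTop, HasDerivAt x (x' t) t) (hxL : Tendsto x atTop (𝓝 L))
    (hx'c : Tendsto x' atTop (𝓝 c)) : c = 0 := by
  obtain ⟨b, hb⟩ := eventually_atTop.mp hx
  have hslope (n : ℕ) : ∃ ξ ∈ Ioo (b + n) (b + n + 1), x' ξ = x (b + n + 1) - x (b + n) := by
    have hderiv : ∀ s ∈ Icc (b + n) (b + n + 1), HasDerivAt x (x' s) s := fun s hs =>
      hb s (by linarith [hs.1, n.cast_nonneg (α := ℝ)])
    obtain ⟨ξ, hξ, heq⟩ := exists_hasDerivAt_eq_slope x x' (lt_add_one (b + n))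
      (fun s hs => (hderiv s hs).continuousAt.continuousWithinAt)
      (fun s hs => hderiv s (Ioo_subset_Icc_self hs))
    exact ⟨ξ, hξ, by rw [heq, add_sub_cancel_left, div_one]⟩
  choose ξ hξ heq using hslope
  have hshift : Tendsto (fun n : ℕ => b + n) atTop atTop :=
    tendsto_atTop_add_const_left _ _ tendsto_natCast_atTop_atTop
  have hξ_top : Tendsto ξ atTop atTop := tendsto_atTop_mono (fun n => (hξ n).1.le) hshift
  have hdiff : Tendsto (fun n : ℕ => x (b + n + 1) - x (b + n)) atTop (𝓝 (L - L)) :=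
    (hxL.comp (tendsto_atTop_add_const_right _ 1 hshift)).sub (hxL.comp hshift)
  rw [sub_self] at hdiff
  exact tendsto_nhds_unique ((hx'c.comp hξ_top).congr heq) hdiff

theorem exists_tendsto_of_monotoneOn_Ici {b : ℝ} (hx : MonotoneOn x (Ici a))
    (hb : ∀ t ∈ Ici a, x t ≤ b) : ∃ L ∈ Icc (x a) b, Tendsto x atTop (𝓝 L) := by
  have hbdd : BddAbove (range fun t : Ici a => x t) := ⟨b, by rintro _ ⟨t, rfl⟩; exact hb t t.2⟩
  refine ⟨⨆ t : Ici a, x t, ⟨le_ciSup (f := fun t : Ici a => x t) hbdd ⟨a, self_mem_Ici⟩,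
    ciSup_le fun t => hb t t.2⟩, ?_⟩
  exact tendsto_comp_val_Ici_atTop.mp (tendsto_atTop_ciSup (monotoneOn_iff_monotone.mp hx) hbdd)

theorem exists_tendsto_of_antitoneOn_Ici {b : ℝ} (hx : AntitoneOn x (Ici a))
    (hb : ∀ t ∈ Ici a, b ≤ x t) : ∃ L ∈ Icc b (x a), Tendsto x atTop (𝓝 L) := by
  have hbdd : BddBelow (range fun t : Ici a => x t) := ⟨b, by rintro _ ⟨t, rfl⟩; exact hb t t.2⟩
  refine ⟨⨅ t : Ici a, x t, ⟨le_ciInf fun t => hb t t.2,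
    ciInf_le (f := fun t : Ici a => x t) hbdd ⟨a, self_mem_Ici⟩⟩, ?_⟩
  exact tendsto_comp_val_Ici_atTop.mp (tendsto_atTop_ciInf (antitoneOn_iff_antitone.mp hx) hbdd)

theorem apply_eq_zero_of_tendsto (hf : ContinuousOn f U)
    (hx : ∀ t ∈ Ici a, HasDerivWithinAt x (f (x t)) (Ici a) t) (hxU : MapsTo x (Ici a) U)
    {L : ℝ} (hL : L ∈ U) (hxL : Tendsto x atTop (𝓝 L)) : f L = 0 := by
  have hxL' : Tendsto x atTop (𝓝[U] L) :=
    tendsto_nhdsWithin_iff.mpr ⟨hxL, eventually_atTop.mpr ⟨a, fun t ht => hxU ht⟩⟩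
  refine eq_zero_of_tendsto_of_tendsto_deriv ?_ hxL ((hf L hL).tendsto.comp hxL')
  filter_upwards [eventually_gt_atTop a] with t ht
  exact (hx t ht.le).hasDerivAt (Ici_mem_nhds ht)

theorem eqOn_Ici_of_apply_eq_equilibrium (hf : LocallyLipschitzOn U f) (he : e ∈ U)
    (hfe : f e = 0) (hx : ∀ t ∈ Ici a, HasDerivWithinAt x (f (x t)) (Ici a) t)
    (hxU : MapsTo x (Ici a) U) {t₀ : ℝ} (ht₀ : a ≤ t₀) (h : x t₀ = e) :
    ∀ t ∈ Ici a, x t = e :=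
  eqOn_Ici_of_locallyLipschitzOn hf hx hxU (y := fun _ => e)
    (fun t _ => hfe ▸ hasDerivWithinAt_const t _ e) (fun _ _ => he) ht₀ h

theorem ODE_solution_tendsto_stable_equilibrium [U.OrdConnected]
    (hf : LocallyLipschitzOn U f) (he : e ∈ U) (hfe : f e = 0)
    (hpos : ∀ y ∈ U, y < e → 0 < f y) (hneg : ∀ y ∈ U, e < y → f y < 0)
    (hx : ∀ t ∈ Ici a, HasDerivWithinAt x (f (x t)) (Ici a) t) (hxU : MapsTo x (Ici a) U) :
    (x a = e → ∀ t ∈ Ici a, x t = e) ∧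
    (e < x a → StrictAntiOn x (Ici a) ∧ ∀ t ∈ Ici a, e < x t) ∧
    (x a < e → StrictMonoOn x (Ici a) ∧ ∀ t ∈ Ici a, x t < e) ∧
    Tendsto x atTop (𝓝 e) := by
  have hcont : ContinuousOn x (Ici a) := fun t ht => (hx t ht).continuousWithinAt
  have hderiv : ∀ t ∈ interior (Ici a), deriv x t = f (x t) := fun t ht =>
    ((hx t (interior_subset ht)).hasDerivAt (mem_interior_iff_mem_nhds.mp ht)).deriv
  have hconst : x a = e → ∀ t ∈ Ici a, x t = e :=
    eqOn_Ici_of_apply_eq_equilibrium hf he hfe hx hxU le_rfl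
  have hne (ha : x a ≠ e) (t : ℝ) (ht : t ∈ Ici a) : x t ≠ e := fun h =>
    ha (eqOn_Ici_of_apply_eq_equilibrium hf he hfe hx hxU ht h a self_mem_Ici)
  have habove (ha : e < x a) : StrictAntiOn x (Ici a) ∧ ∀ t ∈ Ici a, e < x t := by
    have hgt := lt_of_continuousOn_Ici_of_ne' hcont (hne ha.ne') ha
    refine ⟨strictAntiOn_of_deriv_neg (convex_Ici a) hcont fun t ht => ?_, hgt⟩
    rw [hderiv t ht]
    exact hneg _ (hxU (interior_subset ht)) (hgt t (interior_subset ht))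
  have hbelow (ha : x a < e) : StrictMonoOn x (Ici a) ∧ ∀ t ∈ Ici a, x t < e := by
    have hlt := lt_of_continuousOn_Ici_of_ne hcont (hne ha.ne) ha
    refine ⟨strictMonoOn_of_deriv_pos (convex_Ici a) hcont fun t ht => ?_, hlt⟩
    rw [hderiv t ht]
    exact hpos _ (hxU (interior_subset ht)) (hlt t (interior_subset ht))
  refine ⟨hconst, habove, hbelow, ?_⟩
  have hxa : x a ∈ U := hxU self_mem_Ici
  rcases lt_trichotomy (x a) e with ha | ha | ha
  · obtain ⟨L, hL, hxL⟩ := exists_tendsto_of_monotoneOn_Ici (hbelow ha).1.monotoneOn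
      fun t ht => ((hbelow ha).2 t ht).le
    have hLU : L ∈ U := Set.Icc_subset U hxa he hL
    obtain rfl : L = e := hL.2.eq_of_not_lt fun hLe =>
      (hpos L hLU hLe).ne' (apply_eq_zero_of_tendsto hf.continuousOn hx hxU hLU hxL)
    exact hxL
  · exact tendsto_nhds_of_eventually_eq (eventually_atTop.mpr ⟨a, hconst ha⟩)
  · obtain ⟨L, hL, hxL⟩ := exists_tendsto_of_antitoneOn_Ici (habove ha).1.antitoneOn
      fun t ht => ((habove ha).2 t ht).le
    have hLU : L ∈ U := Set.Icc_subset U he hxa hL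
    obtain rfl : L = e := (hL.1.eq_of_not_lt fun heL =>
      (hneg L hLU heL).ne (apply_eq_zero_of_tendsto hf.continuousOn hx hxU hLU hxL)).symm
    exact hxL

end AutonomousScalarODE

noncomputable section CircleFlowField

def circleFlowField (M Rbar κ R : ℝ) : ℝ :=
  (-(2 / R) * √(1 - 2 * M / R) + (2 / Rbar) * √(1 - 2 * M / Rbar) + κ * (1 / R - 1 / Rbar)) *
    √(1 - 2 * M / R)

def circleFlowProfile (M κ R : ℝ) : ℝ := (κ - 2 * √(1 - 2 * M / R)) / R

variable {M Rbar κ R : ℝ}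

theorem circleFlowField_eq : circleFlowField M Rbar κ R =
    (circleFlowProfile M κ R - circleFlowProfile M κ Rbar) * √(1 - 2 * M / R) := by
  unfold circleFlowField circleFlowProfile
  ring

theorem one_sub_two_mul_div_pos (hM : 0 ≤ M) (hR : 2 * M < R) : 0 < 1 - 2 * M / R := by
  rw [sub_pos, div_lt_one (by linarith)]
  exact hR

theorem circleFlowProfile_strictAntiOn (hM : 0 ≤ M) (hκ : 2 < κ) :
    StrictAntiOn (circleFlowProfile M κ) (Ioi (2 * M)) := by
  intro a ha b hb hab
  have ha0 : 0 < a := by linarith [mem_Ioi.mp ha]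
  have hb0 : 0 < b := ha0.trans hab
  have hsb : √(1 - 2 * M / b) ≤ 1 :=
    sqrt_le_one.mpr (by linarith [div_nonneg (by linarith : 0 ≤ 2 * M) hb0.le])
  have hsab : √(1 - 2 * M / a) ≤ √(1 - 2 * M / b) := sqrt_le_sqrt (by gcongr)
  calc (κ - 2 * √(1 - 2 * M / b)) / b < (κ - 2 * √(1 - 2 * M / b)) / a :=
        div_lt_div_of_pos_left (by linarith) ha0 hab
    _ ≤ (κ - 2 * √(1 - 2 * M / a)) / a := by gcongr

theorem circleFlowField_self : circleFlowField M Rbar κ Rbar = 0 := by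
  simp [circleFlowField_eq]

theorem circleFlowField_pos (hM : 0 ≤ M) (hκ : 2 < κ) (hR : 2 * M < R) (hRRbar : R < Rbar) :
    0 < circleFlowField M Rbar κ R := by
  rw [circleFlowField_eq]
  exact mul_pos (sub_pos.mpr (circleFlowProfile_strictAntiOn hM hκ hR (hR.trans hRRbar) hRRbar))
    (sqrt_pos.mpr (one_sub_two_mul_div_pos hM hR))

theorem circleFlowField_neg (hM : 0 ≤ M) (hκ : 2 < κ) (hRbar : 2 * M < Rbar)
    (hRRbar : Rbar < R) : circleFlowField M Rbar κ R < 0 := by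
  have hR : 2 * M < R := hRbar.trans hRRbar
  rw [circleFlowField_eq]
  exact mul_neg_of_neg_of_pos
    (sub_neg.mpr (circleFlowProfile_strictAntiOn hM hκ hRbar hR hRRbar))
    (sqrt_pos.mpr (one_sub_two_mul_div_pos hM hR))

theorem circleFlowField_contDiffOn (hM : 0 ≤ M) :
    ContDiffOn ℝ 1 (circleFlowField M Rbar κ) (Ioi (2 * M)) := by
  intro R hR
  have hR0 : R ≠ 0 := (show 0 < R by linarith [mem_Ioi.mp hR]).ne'
  have hsqrt_arg : 1 - 2 * M / R ≠ 0 := (one_sub_two_mul_div_pos hM hR).ne'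
  unfold circleFlowField
  apply ContDiffAt.contDiffWithinAt
  fun_prop (disch := assumption)

end CircleFlowField

/-- Global asymptotic stability of the target circle `R ≡ R̄` for the reduced circle-flow
ODE `R' = F(R)` in a fixed Schwarzschild background of mass `M`, where
`F(R) = [−(2/R)√(1 − 2M/R) + (2/R̄)√(1 − 2M/R̄) + κ(1/R − 1/R̄)]·√(1 − 2M/R)` on
`(2M, ∞)`: every differentiable solution `R : [0,∞) → (2M, ∞)` is constant if
`R(0) = R̄`, strictly decreasing and `> R̄` if `R(0) > R̄`, strictly increasing and `< R̄`
if `R(0) < R̄`, and in all cases `R(t) → R̄` as `t → ∞`. -/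
theorem schwarzschild_flow_ode_stability (M Rbar κ : ℝ) (hM : 0 < M) (hRbar : 2 * M < Rbar)
    (hκ : 2 < κ) (F : ℝ → ℝ)
    (hF : ∀ R : ℝ, F R =
      (-(2/R) * Real.sqrt (1 - 2*M/R) + (2/Rbar) * Real.sqrt (1 - 2*M/Rbar)
        + κ * (1/R - 1/Rbar)) * Real.sqrt (1 - 2*M/R))
    (R : ℝ → ℝ) (hrange : ∀ t, 0 ≤ t → 2 * M < R t)
    (hode : ∀ t, 0 ≤ t → HasDerivWithinAt R (F (R t)) (Set.Ici 0) t) :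
    (R 0 = Rbar → ∀ t, 0 ≤ t → R t = Rbar) ∧
    (Rbar < R 0 → StrictAntiOn R (Set.Ici 0) ∧ ∀ t, 0 ≤ t → Rbar < R t) ∧
    (R 0 < Rbar → StrictMonoOn R (Set.Ici 0) ∧ ∀ t, 0 ≤ t → R t < Rbar) ∧
    Tendsto R atTop (nhds Rbar) := by
  obtain rfl : F = circleFlowField M Rbar κ := funext hF
  exact ODE_solution_tendsto_stable_equilibrium
    ((circleFlowField_contDiffOn hM.le).locallyLipschitzOn (convex_Ioi _)) hRbar
    circleFlowField_self (fun _ hR hRRbar => circleFlowField_pos hM.le hκ hR hRRbar)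
    (fun _ _ hRRbar => circleFlowField_neg hM.le hκ hRbar hRRbar) hode hrange
end

section
/- Let κ > 2. If b : [−1,1] → ℝ is twice continuously differentiable and satisfies (1 − x²)b''(x) − 2x b'(x) = (κ/π)·∫_{−1}^{1} b(y)/√(1 − y²) dy for all x ∈ [−1,1], then b is identically zero. -/
/-!
The left-hand side is the derivative of the flux `(1 - x²) b'(x)`, so the equation says that the
flux is affine with slope `c = (κ/π) ∫ b/√(1-y²)`. The flux vanishes at both endpoints `±1`,
hence `c = 0` and the flux vanishes identically; thus `b' = 0` on `(-1, 1)`, and by continuity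
`b` is a constant `β` on `[-1, 1]`. Then `c = κ β`, because the weight `1/√(1-y²)` has total
mass `π`, and `κ ≠ 0` gives `β = 0`.
-/

open Real Set

theorem integral_one_div_sqrt_one_sub_sq :
    ∫ y in (-1 : ℝ)..1, 1 / √(1 - y ^ 2) = π := by
  have hderiv : ∀ x ∈ Ioo (-1 : ℝ) 1, HasDerivAt arcsin (1 / √(1 - x ^ 2)) x :=
    fun x hx => hasDerivAt_arcsin hx.1.ne' hx.2.ne
  have hint : IntervalIntegrable (fun y : ℝ => 1 / √(1 - y ^ 2)) MeasureTheory.volume (-1) 1 := by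
    have hmin : min (-1 : ℝ) 1 = -1 := by norm_num
    have hmax : max (-1 : ℝ) 1 = 1 := by norm_num
    refine intervalIntegral.intervalIntegrable_deriv_of_nonneg continuous_arcsin.continuousOn
      ?_ ?_ <;> rw [hmin, hmax]
    · exact hderiv
    · intro x _; positivity
  rw [intervalIntegral.integral_eq_sub_of_hasDerivAt_of_le (by norm_num)
    continuous_arcsin.continuousOn hderiv hint, arcsin_one, arcsin_neg_one]
  ring

theorem eq_add_mul_sub_of_hasDerivWithinAt_const {g : ℝ → ℝ} {a b c : ℝ}
    (hg : ∀ x ∈ Icc a b, HasDerivWithinAt g c (Icc a b) x) :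
    ∀ x ∈ Icc a b, g x = g a + c * (x - a) := by
  have hline : ∀ x, HasDerivAt (fun x => g a + c * (x - a)) c x := fun x => by
    simpa using ((hasDerivAt_id x).sub_const a).const_mul c |>.const_add (g a)
  refine eq_of_has_deriv_right_eq (f' := fun _ => c) (fun x hx => ?_)
    (fun x _ => (hline x).hasDerivWithinAt) (fun x hx => (hg x hx).continuousWithinAt)
    (fun x _ => (hline x).continuousAt.continuousWithinAt) (by simp)
  exact (hg x (Ico_subset_Icc_self hx)).mono_of_mem_nhdsWithin (Icc_mem_nhdsGE_of_mem hx)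

theorem hasDerivWithinAt_one_sub_sq_mul_derivWithin {b : ℝ → ℝ} {s : Set ℝ}
    (hs : UniqueDiffOn ℝ s) (hb : ContDiffOn ℝ 2 b s) {x : ℝ} (hx : x ∈ s) :
    HasDerivWithinAt (fun x => (1 - x ^ 2) * derivWithin b s x)
      ((1 - x ^ 2) * iteratedDerivWithin 2 b s x - 2 * x * derivWithin b s x) s x := by
  have hb' : DifferentiableOn ℝ (derivWithin b s) s :=
    (hb.derivWithin hs (by norm_num) : ContDiffOn ℝ 1 _ s).differentiableOn (by norm_num)
  rw [iteratedDerivWithin_succ', iteratedDerivWithin_one]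
  have hweight : HasDerivWithinAt (fun x : ℝ => 1 - x ^ 2) (-(2 * x)) s x := by
    simpa using ((hasDerivAt_pow 2 x).hasDerivWithinAt.const_sub (1 : ℝ))
  exact (hweight.fun_mul (hb' x hx).hasDerivWithinAt).congr_deriv (by ring)

theorem eqOn_const_of_one_sub_sq_mul_derivWithin_eq_zero {b : ℝ → ℝ}
    (hb : ContDiffOn ℝ 1 b (Icc (-1) 1))
    (h : ∀ x ∈ Icc (-1 : ℝ) 1, (1 - x ^ 2) * derivWithin b (Icc (-1) 1) x = 0) :
    ∀ x ∈ Icc (-1 : ℝ) 1, b x = b (-1) := by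
  have hI : UniqueDiffOn ℝ (Icc (-1 : ℝ) 1) := uniqueDiffOn_Icc (by norm_num)
  have hIoo : EqOn (derivWithin b (Icc (-1) 1)) 0 (Ioo (-1) 1) := fun x hx => by
    have : 1 - x ^ 2 ≠ 0 := by nlinarith [hx.1, hx.2]
    simpa [this] using h x (Ioo_subset_Icc_self hx)
  have hIcc : EqOn (derivWithin b (Icc (-1) 1)) 0 (Icc (-1) 1) :=
    hIoo.of_subset_closure (hb.continuousOn_derivWithin hI le_rfl) continuousOn_const
      Ioo_subset_Icc_self (by rw [closure_Ioo (by norm_num)])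
  exact constant_of_derivWithin_zero (hb.differentiableOn one_ne_zero)
    fun x hx => hIcc (Ico_subset_Icc_self hx)

/-- Case `α = 0` of the nonlocal Legendre-type equation: if `κ > 2` and
`b : [−1,1] → ℝ` is twice continuously differentiable with
`(1 − x²)b''(x) − 2x b'(x) = (κ/π)·∫_{−1}^{1} b(y)/√(1 − y²) dy` for all `x ∈ [−1,1]`,
then `b` is identically zero. -/
theorem nonlocal_legendre_alpha_zero (κ : ℝ) (hκ : 2 < κ) (b : ℝ → ℝ)
    (hb : ContDiffOn ℝ 2 b (Set.Icc (-1) 1))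
    (heq : ∀ x ∈ Set.Icc (-1:ℝ) 1,
      (1 - x^2) * iteratedDerivWithin 2 b (Set.Icc (-1) 1) x
        - 2 * x * derivWithin b (Set.Icc (-1) 1) x
        = (κ/π) * ∫ y in (-1:ℝ)..1, b y / Real.sqrt (1 - y^2)) :
    ∀ x ∈ Set.Icc (-1:ℝ) 1, b x = 0 := by
  set c := (κ / π) * ∫ y in (-1 : ℝ)..1, b y / √(1 - y ^ 2) with hc
  set flux := fun x => (1 - x ^ 2) * derivWithin b (Icc (-1) 1) x
  have hflux : ∀ x ∈ Icc (-1 : ℝ) 1, flux x = c * (x + 1) := fun x hx => by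
    have := eq_add_mul_sub_of_hasDerivWithinAt_const (fun y hy => heq y hy ▸
      hasDerivWithinAt_one_sub_sq_mul_derivWithin (uniqueDiffOn_Icc (by norm_num)) hb hy) x hx
    simpa [flux] using this
  have hc0 : c = 0 := by simpa [flux] using (hflux 1 (by norm_num)).symm
  have hconst := eqOn_const_of_one_sub_sq_mul_derivWithin_eq_zero (hb.of_le (by norm_num))
    fun x hx => (hflux x hx).trans (by rw [hc0, zero_mul])
  have hint : ∫ y in (-1 : ℝ)..1, b y / √(1 - y ^ 2) = b (-1) * π := by
    rw [← integral_one_div_sqrt_one_sub_sq, ← intervalIntegral.integral_const_mul]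
    refine intervalIntegral.integral_congr fun y hy => ?_
    rw [uIcc_of_le (by norm_num)] at hy
    rw [hconst y hy, mul_one_div]
  have hb0 : κ * b (-1) = 0 := by
    rw [← hc0, hc, hint]
    field_simp
  intro x hx
  rw [hconst x hx, (mul_eq_zero.mp hb0).resolve_left (by linarith)]
end
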